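/- Let A|B be an H-separable extension with H-separability system {e_i, r_i}, B simple, and suppose e: A → B splits the inclusion as a right B-module map. Then every two-sided ideal I of A satisfies I = (I ∩ B)A; in particular, since B is simple, A is simple. -/

import Mathlib

open TensorProduct

noncomputable section

namespace D2

variable (A : Type*) [Ring A] (B : Subring A)

/-- The defining relations of `A ⊗_B A` as a quotient of `A ⊗_ℤ A`. -/
def relSub : Submodule ℤ (A ⊗[ℤ] A) :=
  Submodule.span ℤ {x | ∃ (a c : A) (b : B), x = (a * (b : A)) ⊗ₜ[ℤ] c - a ⊗ₜ[ℤ] ((b : A) * c)}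

/-- The tensor square `A ⊗_B A` of a ring extension `B ⊆ A`. -/
abbrev TensorSq := (A ⊗[ℤ] A) ⧸ relSub A B

/-- The class of a simple tensor `a ⊗_B c`. -/
def tmulB (a c : A) : TensorSq A B := Submodule.Quotient.mk (a ⊗ₜ[ℤ] c)

/-- Left multiplication `a₀ • (x ⊗ y) = (a₀ x) ⊗ y` on `A ⊗_B A`. -/
def lmul (a : A) : TensorSq A B →ₗ[ℤ] TensorSq A B :=
  Submodule.mapQ _ _ (TensorProduct.map (LinearMap.mulLeft ℤ a) LinearMap.id) (by
    rw [relSub, Submodule.span_le]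
    rintro x ⟨a', c, b, rfl⟩
    simp only [SetLike.mem_coe, Submodule.mem_comap, map_sub, TensorProduct.map_tmul,
      LinearMap.mulLeft_apply, LinearMap.id_apply]
    refine Submodule.subset_span ⟨a * a', c, b, (map_sub (TensorProduct.map (LinearMap.mulLeft ℤ a) LinearMap.id) _ _).trans (by simp [mul_assoc])⟩)

/-- Right multiplication `(x ⊗ y) • a₀ = x ⊗ (y a₀)` on `A ⊗_B A`. -/
def rmul (a : A) : TensorSq A B →ₗ[ℤ] TensorSq A B :=
  Submodule.mapQ _ _ (TensorProduct.map LinearMap.id (LinearMap.mulRight ℤ a)) (by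
    rw [relSub, Submodule.span_le]
    rintro x ⟨a', c, b, rfl⟩
    simp only [SetLike.mem_coe, Submodule.mem_comap, map_sub, TensorProduct.map_tmul,
      LinearMap.mulRight_apply, LinearMap.id_apply]
    refine Submodule.subset_span ⟨a', c * a, b, (map_sub (TensorProduct.map LinearMap.id (LinearMap.mulRight ℤ a)) _ _).trans (by simp [mul_assoc])⟩)

/-- The multiplication map `A ⊗_B A → A`, `x ⊗ y ↦ x y`. -/
def mulQ : TensorSq A B →ₗ[ℤ] A :=
  Submodule.liftQ _ (LinearMap.mul' ℤ A) (by
    rw [relSub, Submodule.span_le]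
    rintro x ⟨a, c, b, rfl⟩
    simp [LinearMap.mem_ker, mul_assoc]
    exact LinearMap.mem_ker.2 ((map_sub (LinearMap.mul' ℤ A) _ _).trans (by simp [mul_assoc])))

/-- An element `t` of `A ⊗_B A` is `B`-central when `b t = t b` for all `b ∈ B`. -/
def IsBCentral (t : TensorSq A B) : Prop := ∀ b ∈ B, lmul A B b t = rmul A B b t

/-- An element `t` of `A ⊗_B A` is `A`-central (a Casimir element) when `a t = t a`. -/
def IsACentral (t : TensorSq A B) : Prop := ∀ a : A, lmul A B a t = rmul A B a t

/-- A `B`-`B`-bimodule endomorphism of `A`. -/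
def IsBB (α : A →ₗ[ℤ] A) : Prop :=
  ∀ b ∈ B, ∀ a : A, α ((b : A) * a) = b * α a ∧ α (a * b) = α a * b

/-- A right `B`-module endomorphism of `A`. -/
def IsRightB (f : A →ₗ[ℤ] A) : Prop := ∀ a : A, ∀ b ∈ B, f (a * b) = f a * b

/-- `x ↦ (x·) ⊗ id` as a linear map, used to build Sweedler-type expressions. -/
def lmulTen : A →ₗ[ℤ] (A ⊗[ℤ] A) →ₗ[ℤ] (A ⊗[ℤ] A) where
  toFun a := TensorProduct.map (LinearMap.mulLeft ℤ a) LinearMap.id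
  map_add' a a' := by
    apply TensorProduct.ext'
    intro x y
    simp [add_mul, TensorProduct.add_tmul]
    rfl
  map_smul' z a := by
    apply TensorProduct.ext'
    intro x y
    simp only [TensorProduct.map_tmul, LinearMap.mulLeft_apply, LinearMap.id_apply,
      LinearMap.smul_apply, RingHom.id_apply, smul_mul_assoc, TensorProduct.smul_tmul']
    rfl

/-- For `ζ = Σ u ⊗ v`, the map `a ↦ Σ α(a u) v`, i.e. `α(? ζ¹) ζ²`. -/
def sweed (α : A →ₗ[ℤ] A) (ζ : A ⊗[ℤ] A) : A →ₗ[ℤ] A :=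
  ((LinearMap.mul' ℤ A).comp (TensorProduct.map α LinearMap.id)).comp ((lmulTen A).flip ζ)

/-- For `ζ = Σ u ⊗ v`, the element `Σ u r v` ("sandwich" evaluation `ζ¹ r ζ²`). -/
def sandw (r : A) (ζ : A ⊗[ℤ] A) : A :=
  (LinearMap.mul' ℤ A) ((TensorProduct.map (LinearMap.mulRight ℤ r) LinearMap.id) ζ)

/-- `mul₂ ζ ξ = Σ (u x) ⊗ (y v)` for `ζ = Σ u ⊗ v`, `ξ = Σ x ⊗ y`:
the product `ξ ·_T ζ` of two elements of `T = (A ⊗_B A)^B` on representatives. -/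
def mul₂ : (A ⊗[ℤ] A) →ₗ[ℤ] (A ⊗[ℤ] A) →ₗ[ℤ] (A ⊗[ℤ] A) :=
  TensorProduct.lift <| LinearMap.mk₂ ℤ
    (fun u v => TensorProduct.map (LinearMap.mulLeft ℤ u) (LinearMap.mulRight ℤ v))
    (fun u u' v => by
      apply TensorProduct.ext'
      intro x y
      simp [add_mul, TensorProduct.add_tmul]
      rfl)
    (fun z u v => by
      apply TensorProduct.ext'
      intro x y
      simp only [TensorProduct.map_tmul, LinearMap.mulLeft_apply, LinearMap.mulRight_apply,
        LinearMap.smul_apply, smul_mul_assoc, TensorProduct.smul_tmul']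
      rfl)
    (fun u v v' => by
      apply TensorProduct.ext'
      intro x y
      simp [mul_add, TensorProduct.tmul_add]
      rfl)
    (fun z u v => by
      apply TensorProduct.ext'
      intro x y
      simp only [TensorProduct.map_tmul, LinearMap.mulLeft_apply, LinearMap.mulRight_apply,
        LinearMap.smul_apply, mul_smul_comm, TensorProduct.tmul_smul]
      rfl)

/-- `A` is balanced as a right `B`-module. -/
def RightBalanced : Prop :=
  ∀ φ : A →+ A,
    (∀ f : A →+ A, (∀ a : A, ∀ b ∈ B, f (a * b) = f a * b) → ∀ a, φ (f a) = f (φ a)) →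
    ∃ b ∈ B, ∀ a, φ a = a * b

end D2

end


section Aux

open TensorProduct

variable {A : Type*} [Ring A] (B : Subring A)

/-- For a right `B`-linear `f`, the map `u ⊗ v ↦ f(u) v` descends to `A ⊗_B A`. -/
noncomputable def liftRB (f : A →ₗ[ℤ] A) (hf : D2.IsRightB A B f) : D2.TensorSq A B →ₗ[ℤ] A :=
  Submodule.liftQ _ ((LinearMap.mul' ℤ A).comp (TensorProduct.map f LinearMap.id)) (by
    rw [D2.relSub, Submodule.span_le]
    rintro x ⟨a, c, b, rfl⟩
    refine LinearMap.mem_ker.2 ((map_sub ((LinearMap.mul' ℤ A).comp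
      (TensorProduct.map f LinearMap.id)) _ _).trans ?_)
    simp only [SetLike.mem_coe, LinearMap.mem_ker, map_sub, LinearMap.comp_apply,
      TensorProduct.map_tmul, LinearMap.id_apply, LinearMap.mul'_apply]
    rw [hf a b b.2, mul_assoc, sub_self])

lemma liftRB_mk (f : A →ₗ[ℤ] A) (hf : D2.IsRightB A B f) (t : A ⊗[ℤ] A) :
    liftRB B f hf (Submodule.Quotient.mk t) =
      (LinearMap.mul' ℤ A) ((TensorProduct.map f LinearMap.id) t) := rfl

lemma lmul_mk (a : A) (t : A ⊗[ℤ] A) :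
    D2.lmul A B a (Submodule.Quotient.mk t) =
      Submodule.Quotient.mk
        ((TensorProduct.map (LinearMap.mulLeft ℤ a) LinearMap.id) t) := rfl

lemma rmul_mk (a : A) (t : A ⊗[ℤ] A) :
    D2.rmul A B a (Submodule.Quotient.mk t) =
      Submodule.Quotient.mk
        ((TensorProduct.map LinearMap.id (LinearMap.mulRight ℤ a)) t) := rfl

lemma lmul_lmul (a c : A) (ξ : D2.TensorSq A B) :
    D2.lmul A B a (D2.lmul A B c ξ) = D2.lmul A B (a * c) ξ := by
  obtain ⟨t, rfl⟩ := Submodule.Quotient.mk_surjective _ ξ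
  have h : (TensorProduct.map (LinearMap.mulLeft ℤ a) LinearMap.id).comp
      (TensorProduct.map (LinearMap.mulLeft ℤ c) (LinearMap.id (M := A))) =
      TensorProduct.map (LinearMap.mulLeft ℤ (a * c)) LinearMap.id := by
    apply TensorProduct.ext'
    intro u v
    simp [mul_assoc]
  rw [lmul_mk, lmul_mk, lmul_mk, ← LinearMap.comp_apply, h]

lemma rmul_lmul (a c : A) (ξ : D2.TensorSq A B) :
    D2.rmul A B a (D2.lmul A B c ξ) = D2.lmul A B c (D2.rmul A B a ξ) := by
  obtain ⟨t, rfl⟩ := Submodule.Quotient.mk_surjective _ ξ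
  have h : (TensorProduct.map LinearMap.id (LinearMap.mulRight ℤ a)).comp
      (TensorProduct.map (LinearMap.mulLeft ℤ c) (LinearMap.id (M := A))) =
      (TensorProduct.map (LinearMap.mulLeft ℤ c) LinearMap.id).comp
      (TensorProduct.map LinearMap.id (LinearMap.mulRight ℤ a)) := by
    apply TensorProduct.ext'
    intro u v
    simp
  rw [lmul_mk, rmul_mk, rmul_mk, lmul_mk, ← LinearMap.comp_apply, h, LinearMap.comp_apply]

/-- Key identity 1: every right `B`-linear map `f` satisfies
`f x = Σᵢ μ((f ⊗ id)((id ⊗ ·(x rᵢ))(eᵢ)))`, i.e. `f(x) = Σ f(eᵢ¹) eᵢ² x rᵢ`. -/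
lemma rb_apply_eq (n : ℕ) (eT : Fin n → A ⊗[ℤ] A) (r : Fin n → A)
    (hce : ∀ i, D2.IsACentral A B (Submodule.Quotient.mk (eT i)))
    (hsys : ∑ i, D2.lmul A B (r i) (Submodule.Quotient.mk (eT i)) = D2.tmulB A B 1 1)
    (f : A →ₗ[ℤ] A) (hf : D2.IsRightB A B f) (x : A) :
    f x = ∑ i, (LinearMap.mul' ℤ A) ((TensorProduct.map f LinearMap.id)
      ((TensorProduct.map LinearMap.id (LinearMap.mulRight ℤ (x * r i))) (eT i))) := by
  have h1 := congrArg (D2.lmul A B x) hsys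
  rw [map_sum] at h1
  have h2 : ∀ i, D2.lmul A B x (D2.lmul A B (r i) (Submodule.Quotient.mk (eT i))) =
      D2.rmul A B (x * r i) (Submodule.Quotient.mk (eT i)) := by
    intro i
    rw [lmul_lmul, ← hce i (x * r i)]
  rw [Finset.sum_congr rfl (fun i _ => h2 i)] at h1
  have h3 := congrArg (liftRB B f hf) h1
  rw [map_sum] at h3
  have h4 : liftRB B f hf (D2.lmul A B x (D2.tmulB A B 1 1)) = f x := by
    rw [D2.tmulB, lmul_mk, liftRB_mk]
    simp
  rw [h4] at h3
  rw [← h3]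
  apply Finset.sum_congr rfl
  intro i _
  rw [rmul_mk, liftRB_mk]

/-- Every right `B`-linear map preserves two-sided ideals of `A` (H-separability). -/
lemma rb_maps_ideal (n : ℕ) (eT : Fin n → A ⊗[ℤ] A) (r : Fin n → A)
    (hce : ∀ i, D2.IsACentral A B (Submodule.Quotient.mk (eT i)))
    (hsys : ∑ i, D2.lmul A B (r i) (Submodule.Quotient.mk (eT i)) = D2.tmulB A B 1 1)
    (f : A →ₗ[ℤ] A) (hf : D2.IsRightB A B f) (I : TwoSidedIdeal A)
    {x : A} (hx : x ∈ I) : f x ∈ I := by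
  rw [rb_apply_eq B n eT r hce hsys f hf x]
  apply TwoSidedIdeal.finsetSum_mem
  intro i _
  generalize eT i = t
  induction t using TensorProduct.induction_on with
  | zero => simpa using I.zero_mem
  | tmul u v =>
      simp only [TensorProduct.map_tmul, LinearMap.id_apply, LinearMap.mulRight_apply,
        LinearMap.mul'_apply]
      exact I.mul_mem_left _ _ (I.mul_mem_left _ _ (I.mul_mem_right _ _ hx))
  | add s t hs ht =>
      rw [map_add, map_add, map_add]
      exact I.add_mem hs ht

/-- Key identity 2: `x = Σᵢ e(rᵢ x eᵢ¹) eᵢ²`. -/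
lemma split_decomp (n : ℕ) (eT : Fin n → A ⊗[ℤ] A) (r : Fin n → A)
    (hce : ∀ i, D2.IsACentral A B (Submodule.Quotient.mk (eT i)))
    (hsys : ∑ i, D2.lmul A B (r i) (Submodule.Quotient.mk (eT i)) = D2.tmulB A B 1 1)
    (e : A →ₗ[ℤ] A) (he : D2.IsRightB A B e)
    (hesplit : ∀ b ∈ B, e b = b) (x : A) :
    x = ∑ i, (LinearMap.mul' ℤ A) ((TensorProduct.map e LinearMap.id)
      ((TensorProduct.map (LinearMap.mulLeft ℤ (r i * x)) LinearMap.id) (eT i))) := by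
  have h1 := congrArg (D2.rmul A B x) hsys
  rw [map_sum] at h1
  have h2 : ∀ i, D2.rmul A B x (D2.lmul A B (r i) (Submodule.Quotient.mk (eT i))) =
      D2.lmul A B (r i * x) (Submodule.Quotient.mk (eT i)) := by
    intro i
    rw [rmul_lmul, ← hce i x, lmul_lmul]
  rw [Finset.sum_congr rfl (fun i _ => h2 i)] at h1
  have h3 := congrArg (liftRB B e he) h1
  rw [map_sum] at h3
  have h4 : liftRB B e he (D2.rmul A B x (D2.tmulB A B 1 1)) = x := by
    rw [D2.tmulB, rmul_mk, liftRB_mk]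
    simp [hesplit 1 B.one_mem]
  rw [h4] at h3
  conv_lhs => rw [← h3]
  apply Finset.sum_congr rfl
  intro i _
  rw [lmul_mk, liftRB_mk]

end Aux


open TensorProduct in
/-- for an H-separable extension with `B` simple and a splitting
`e : A → B` of the inclusion, every two-sided ideal `I` of `A` satisfies
`I = (I ∩ B)A`; in particular `A` is simple. -/
theorem stmt15 {A : Type*} [Ring A] (B : Subring A)
    (hBsimple : IsSimpleRing B)
    (n : ℕ) (eT : Fin n → A ⊗[ℤ] A) (r : Fin n → A)
    (hce : ∀ i, D2.IsACentral A B (Submodule.Quotient.mk (eT i)))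
    (hr : ∀ i, r i ∈ Subring.centralizer (B : Set A))
    (hsys : ∑ i, D2.lmul A B (r i) (Submodule.Quotient.mk (eT i)) = D2.tmulB A B 1 1)
    (e : A →ₗ[ℤ] A) (he : D2.IsRightB A B e) (heval : ∀ a, e a ∈ B)
    (hesplit : ∀ b ∈ B, e b = b) :
    (∀ I : TwoSidedIdeal A, ∀ x ∈ I, ∃ (N : ℕ) (b a : Fin N → A),
      (∀ j, b j ∈ I ∧ b j ∈ B) ∧ x = ∑ j, b j * a j) ∧
    IsSimpleRing A := by
  classical
  have key : ∀ I : TwoSidedIdeal A, ∀ x ∈ I, ∃ (N : ℕ) (b a : Fin N → A),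
      (∀ j, b j ∈ I ∧ b j ∈ B) ∧ x = ∑ j, b j * a j := by
    intro I x hx
    choose S hS using fun i => TensorProduct.exists_finset (eT i)
    have hterm : ∀ i, (LinearMap.mul' ℤ A) ((TensorProduct.map e LinearMap.id)
        ((TensorProduct.map (LinearMap.mulLeft ℤ (r i * x)) LinearMap.id) (eT i))) =
        ∑ p ∈ S i, e ((r i * x) * p.1) * p.2 := by
      intro i
      rw [hS i, map_sum, map_sum, map_sum]
      apply Finset.sum_congr rfl
      intro p _
      simp [mul_assoc]
    have hdec : x = ∑ i, ∑ p ∈ S i, e ((r i * x) * p.1) * p.2 :=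
      (split_decomp B n eT r hce hsys e he hesplit x).trans
        (Finset.sum_congr rfl fun i _ => hterm i)
    set T : Finset ((_ : Fin n) × (A × A)) := Finset.univ.sigma (fun i => S i) with hT
    set g : ((_ : Fin n) × (A × A)) → A := fun q => e ((r q.1 * x) * q.2.1) * q.2.2 with hg
    have hdec2 : x = ∑ q ∈ T, g q := by
      rw [hdec, hT, Finset.sum_sigma]
    refine ⟨T.card,
      fun j => e ((r ((T.equivFin.symm j : T) : (_ : Fin n) × (A × A)).1 * x) *
        ((T.equivFin.symm j : T) : (_ : Fin n) × (A × A)).2.1),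
      fun j => ((T.equivFin.symm j : T) : (_ : Fin n) × (A × A)).2.2, ?_, ?_⟩
    · intro j
      constructor
      · exact rb_maps_ideal B n eT r hce hsys e he I
          (I.mul_mem_right _ _ (I.mul_mem_left _ _ hx))
      · exact heval _
    · calc x = ∑ q ∈ T, g q := hdec2
        _ = ∑ q : T, g q := (Finset.sum_coe_sort T g).symm
        _ = ∑ j : Fin T.card, g ((T.equivFin.symm j : T) : (_ : Fin n) × (A × A)) :=
            (Equiv.sum_comp T.equivFin.symm fun q : T => g (q : (_ : Fin n) × (A × A))).symm
  haveI hBs := hBsimple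
  have ntA : Nontrivial A := by
    refine ⟨1, 0, fun h01 => ?_⟩
    exact one_ne_zero (α := B) (Subtype.ext (by simpa using h01))
  refine ⟨key, ?_⟩
  apply IsSimpleRing.of_eq_bot_or_eq_top
  intro I
  by_cases hI : I = ⊥
  · left; exact hI
  right
  have hex : ∃ x ∈ I, x ≠ 0 := by
    by_contra h
    push_neg at h
    exact hI (SetLike.ext fun y =>
      ⟨fun hy => h y hy, fun hy => (show y = 0 from hy) ▸ I.zero_mem⟩)
  obtain ⟨x, hxI, hx0⟩ := hex
  obtain ⟨N, b, a, hba, hsum⟩ := key I x hxI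
  have hbj : ∃ j, b j ≠ 0 := by
    by_contra h
    push_neg at h
    apply hx0
    rw [hsum]
    simp [h]
  obtain ⟨j, hj⟩ := hbj
  let J : TwoSidedIdeal B := TwoSidedIdeal.mk' {β : B | (β : A) ∈ I}
    I.zero_mem
    (fun h1 h2 => I.add_mem h1 h2)
    (fun h1 => I.neg_mem h1)
    (fun h1 => I.mul_mem_left _ _ h1)
    (fun h1 => I.mul_mem_right _ _ h1)
  have hmem : ∀ β : B, β ∈ J ↔ (β : A) ∈ I := fun β =>
    TwoSidedIdeal.mem_mk' _ _ _ _ _ _ β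
  have h1J : (1 : B) ∈ J := IsSimpleRing.one_mem_of_ne_zero_mem J
    (x := (⟨b j, (hba j).2⟩ : B))
    (fun h => hj (by simpa using congrArg Subtype.val h))
    ((hmem _).mpr (hba j).1)
  have h1I : (1 : A) ∈ I := by simpa using (hmem 1).mp h1J
  exact TwoSidedIdeal.eq_top I h1I
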